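/- Let c ∈ {−1, 1}, let I, J ⊆ ℝ be open intervals, D = I × J, and f : I → ℝ, g : J → ℝ smooth with 1 − c f(u) g(v) nowhere zero on D. Fix τ ∈ ℝ, τ ≠ 0, with τ² − c f(u)² ≠ 0 and τ² − c g(v)² ≠ 0 on D, and define H[τ](u,v) = (τ f(u) + τ^{−1} g(v))/(1 − c f(u) g(v)), λ(u,τ) = τ(1 − c f(u)²)/(τ² − c f(u)²), ν(v,τ) = τ(1 − c g(v)²)/(τ² − c g(v)²). Let ω, Q, R : D → ℝ be smooth, and let Ψ⁺, Ψ⁻ : D → SL₂(ℝ) be smooth solutions of ∂_u Ψ^± = Ψ^± U[±τ], ∂_v Ψ^± = Ψ^± V[±τ], where U[τ] = [[−ω_u/4, −Q e^{−ω/2}], [(1/2)(H[τ] + c) λ(u,τ) e^{ω/2}, ω_u/4]] and V[τ] = [[ω_v/4, −(1/2)(H[τ] − c) ν(v,τ) e^{ω/2}], [R e^{−ω/2}, −ω_v/4]]. Define F = Ψ⁺ (Ψ⁻)^{−1} and N = −Ψ⁺ k′ (Ψ⁻)^{−1}, k′ = diag(−1,1). Then, with ⟨X,Y⟩ = (1/2)(tr(XY)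 − tr(X)tr(Y)) on 2×2 real matrices: ⟨F,F⟩ = −1; ⟨∂_u F, ∂_u F⟩ = ⟨∂_v F, ∂_v F⟩ = 0; 2⟨∂_u F, ∂_v F⟩ = τ²(1 − c f²)(1 − c g²) e^ω/((τ² − c f²)(τ² − c g²)); ⟨N,N⟩ = 1; and ⟨N, F⟩ = ⟨N, ∂_u F⟩ = ⟨N, ∂_v F⟩ = 0. -/

import Mathlib

open Matrix

noncomputable section

/-- Partial derivative in the first variable. -/
def pd1 (f : ℝ → ℝ → ℝ) (u v : ℝ) : ℝ := deriv (fun x => f x v) u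

/-- Partial derivative in the second variable. -/
def pd2 (f : ℝ → ℝ → ℝ) (u v : ℝ) : ℝ := deriv (fun y => f u y) v

/-- Smoothness of a two-variable function on a set. -/
def Smooth2 (f : ℝ → ℝ → ℝ) (s : Set (ℝ × ℝ)) : Prop :=
  ContDiffOn ℝ (⊤ : ℕ∞) (fun p : ℝ × ℝ => f p.1 p.2) s

/-- Entrywise derivative of a matrix-valued function of a real variable. -/
def mderiv (f : ℝ → Matrix (Fin 2) (Fin 2) ℝ) (x : ℝ) : Matrix (Fin 2) (Fin 2) ℝ :=
  Matrix.of fun i j => deriv (fun t => f t i j) x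

/-- The matrix `U[τ]` of the Lax pair with two variable spectral parameters. -/
def Umat5 (c : ℝ) (ω Q H : ℝ → ℝ → ℝ) (lam : ℝ → ℝ) (u v : ℝ) : Matrix (Fin 2) (Fin 2) ℝ :=
  !![-(pd1 ω u v) / 4, -(Q u v) * Real.exp (-(ω u v) / 2);
     (1 / 2) * (H u v + c) * lam u * Real.exp (ω u v / 2), (pd1 ω u v) / 4]

/-- The matrix `V[τ]` of the Lax pair with two variable spectral parameters. -/
def Vmat5 (c : ℝ) (ω R H : ℝ → ℝ → ℝ) (nu : ℝ → ℝ) (u v : ℝ) : Matrix (Fin 2) (Fin 2) ℝ :=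
  !![(pd2 ω u v) / 4, -((1 / 2) * (H u v - c) * nu v * Real.exp (ω u v / 2));
     R u v * Real.exp (-(ω u v) / 2), -(pd2 ω u v) / 4]

/-- The matrix `k′ = diag(−1, 1)`. -/
def kmat : Matrix (Fin 2) (Fin 2) ℝ := !![-1, 0; 0, 1]

/-- The scalar product `⟨X,Y⟩ = (1/2)(tr(XY) − tr(X)tr(Y))` (the metric of `E⁴₂ = M₂ℝ`). -/
def form2 (X Y : Matrix (Fin 2) (Fin 2) ℝ) : ℝ :=
  (1 / 2) * ((X * Y).trace - X.trace * Y.trace)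

/-! Since `⟨X, X⟩ = -det X`, the form is invariant under `X ↦ P * X * M⁻¹` with
`det P = det M = 1`, so everything can be computed in the frame of `Ψ⁺ * · * (Ψ⁻)⁻¹`: there
`F = 1` and `N = -k′`. Writing `(Ψ⁻)⁻¹ = adj Ψ⁻` and using `adj X = -X` for traceless `X`, the Lax
equations give `F_u = Ψ⁺ (U[τ] - U[-τ]) (Ψ⁻)⁻¹` and `F_v = Ψ⁺ (V[τ] - V[-τ]) (Ψ⁻)⁻¹`. As `H`, `λ`
and `ν` are odd in `τ`, these differences are nilpotent, strictly lower resp. upper triangular with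
entries `c λ e^{ω/2}` and `c ν e^{ω/2}`, and the claims reduce to evaluating the form on `1`, `-k′`
and these two matrices, together with `c² = 1`. -/

open Filter Topology

lemma form2_mul_mul (P M X Y : Matrix (Fin 2) (Fin 2) ℝ) :
    form2 (P * X * M) (P * Y * M) = P.det * M.det * form2 X Y := by
  simp only [form2, Matrix.trace_fin_two, Matrix.det_fin_two, Matrix.mul_apply, Fin.sum_univ_two]
  ring

lemma form2_mul_mul_inv {P M : Matrix (Fin 2) (Fin 2) ℝ} (hP : P.det = 1) (hM : M.det = 1)
    (X Y : Matrix (Fin 2) (Fin 2) ℝ) : form2 (P * X * M⁻¹) (P * Y * M⁻¹) = form2 X Y := by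
  rw [form2_mul_mul, Matrix.det_nonsing_inv, hP, hM]
  simp

lemma Matrix.inv_eq_adjugate_of_det_eq_one {n : Type*} [Fintype n] [DecidableEq n]
    {R : Type*} [CommRing R] {A : Matrix n n R} (h : A.det = 1) : A⁻¹ = A.adjugate := by
  rw [Matrix.inv_def, h, Ring.inverse_one, one_smul]

lemma Matrix.adjugate_fin_two_of_trace_eq_zero {R : Type*} [CommRing R]
    {A : Matrix (Fin 2) (Fin 2) R} (h : A.trace = 0) : A.adjugate = -A := by
  rw [Matrix.trace_fin_two] at h
  rw [Matrix.adjugate_fin_two]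
  ext i j
  fin_cases i <;> fin_cases j <;> simp [neg_eq_of_add_eq_zero_left h, neg_eq_of_add_eq_zero_right h]

lemma hasDerivAt_matrix_mul_apply {m n p : Type*} [Fintype n] {P : ℝ → Matrix m n ℝ}
    {N : ℝ → Matrix n p ℝ} {P' : Matrix m n ℝ} {N' : Matrix n p ℝ} {x : ℝ}
    (hP : ∀ i j, HasDerivAt (fun t => P t i j) (P' i j) x)
    (hN : ∀ i j, HasDerivAt (fun t => N t i j) (N' i j) x) (i : m) (j : p) :
    HasDerivAt (fun t => (P t * N t) i j) ((P' * N x + P x * N') i j) x := by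
  simp only [Matrix.mul_apply, Matrix.add_apply, ← Finset.sum_add_distrib]
  exact HasDerivAt.fun_sum fun k _ => (hP i k).mul (hN k j)

lemma hasDerivAt_adjugate_apply {M : ℝ → Matrix (Fin 2) (Fin 2) ℝ} {M' : Matrix (Fin 2) (Fin 2) ℝ}
    {x : ℝ} (hM : ∀ i j, HasDerivAt (fun t => M t i j) (M' i j) x) (i j : Fin 2) :
    HasDerivAt (fun t => (M t).adjugate i j) (M'.adjugate i j) x := by
  fin_cases i <;> fin_cases j <;> simp only [Matrix.adjugate_fin_two] <;>
    first
      | exact hM _ _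
      | exact (hM _ _).neg

lemma mderiv_congr {M N : ℝ → Matrix (Fin 2) (Fin 2) ℝ} {x : ℝ} (h : M =ᶠ[𝓝 x] N) :
    mderiv M x = mderiv N x := by
  ext i j
  exact Filter.EventuallyEq.deriv_eq (h.mono fun t ht => congrFun (congrFun ht i) j)

lemma mderiv_mul_inv_of_lax {P M : ℝ → Matrix (Fin 2) (Fin 2) ℝ} {A B : Matrix (Fin 2) (Fin 2) ℝ}
    {x : ℝ} (hP : ∀ i j, DifferentiableAt ℝ (fun t => P t i j) x)
    (hM : ∀ i j, DifferentiableAt ℝ (fun t => M t i j) x) (hdet : ∀ᶠ t in 𝓝 x, (M t).det = 1)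
    (hPA : mderiv P x = P x * A) (hMB : mderiv M x = M x * B) (hB : B.trace = 0) :
    mderiv (fun t => P t * (M t)⁻¹) x = P x * (A - B) * (M x)⁻¹ := by
  have hP' : ∀ i j, HasDerivAt (fun t => P t i j) ((P x * A) i j) x := fun i j => by
    rw [← hPA]; exact (hP i j).hasDerivAt
  have hM' : ∀ i j, HasDerivAt (fun t => M t i j) ((M x * B) i j) x := fun i j => by
    rw [← hMB]; exact (hM i j).hasDerivAt
  have hinv : (fun t => P t * (M t)⁻¹) =ᶠ[𝓝 x] fun t => P t * (M t).adjugate :=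
    hdet.mono fun t ht => by simp only [Matrix.inv_eq_adjugate_of_det_eq_one ht]
  rw [mderiv_congr hinv, Matrix.inv_eq_adjugate_of_det_eq_one hdet.self_of_nhds]
  ext i j
  rw [mderiv, Matrix.of_apply,
    (hasDerivAt_matrix_mul_apply hP' (hasDerivAt_adjugate_apply hM') i j).deriv,
    Matrix.adjugate_mul_distrib, Matrix.adjugate_fin_two_of_trace_eq_zero hB]
  noncomm_ring

lemma DifferentiableAt.comp_prodMk_left {𝕜 E F G : Type*} [NontriviallyNormedField 𝕜]
    [NormedAddCommGroup E] [NormedSpace 𝕜 E] [NormedAddCommGroup F] [NormedSpace 𝕜 F]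
    [NormedAddCommGroup G] [NormedSpace 𝕜 G] {φ : E × F → G} {u : E} {v : F}
    (h : DifferentiableAt 𝕜 φ (u, v)) : DifferentiableAt 𝕜 (fun x => φ (x, v)) u :=
  h.comp u (differentiableAt_id.prodMk (differentiableAt_const v))

lemma DifferentiableAt.comp_prodMk_right {𝕜 E F G : Type*} [NontriviallyNormedField 𝕜]
    [NormedAddCommGroup E] [NormedSpace 𝕜 E] [NormedAddCommGroup F] [NormedSpace 𝕜 F]
    [NormedAddCommGroup G] [NormedSpace 𝕜 G] {φ : E × F → G} {u : E} {v : F}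
    (h : DifferentiableAt 𝕜 φ (u, v)) : DifferentiableAt 𝕜 (fun y => φ (u, y)) v :=
  h.comp v ((differentiableAt_const u).prodMk differentiableAt_id)

lemma trace_Umat5 (c : ℝ) (ω Q H : ℝ → ℝ → ℝ) (lam : ℝ → ℝ) (u v : ℝ) :
    (Umat5 c ω Q H lam u v).trace = 0 := by
  simp only [Umat5, Matrix.trace_fin_two, Matrix.of_apply, Matrix.cons_val', Matrix.cons_val_zero,
    Matrix.cons_val_one, Matrix.empty_val', Matrix.cons_val_fin_one]
  ring

lemma trace_Vmat5 (c : ℝ) (ω R H : ℝ → ℝ → ℝ) (nu : ℝ → ℝ) (u v : ℝ) :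
    (Vmat5 c ω R H nu u v).trace = 0 := by
  simp only [Vmat5, Matrix.trace_fin_two, Matrix.of_apply, Matrix.cons_val', Matrix.cons_val_zero,
    Matrix.cons_val_one, Matrix.empty_val', Matrix.cons_val_fin_one]
  ring

lemma Umat5_sub_Umat5 {c : ℝ} {ω Q H H' : ℝ → ℝ → ℝ} {lam lam' : ℝ → ℝ} {u v : ℝ}
    (hH : H' u v = -H u v) (hlam : lam' u = -lam u) :
    Umat5 c ω Q H lam u v - Umat5 c ω Q H' lam' u v
      = !![0, 0; c * lam u * Real.exp (ω u v / 2), 0] := by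
  ext i j
  fin_cases i <;> fin_cases j <;>
    simp only [Umat5, Matrix.sub_apply, Matrix.of_apply, Matrix.cons_val', Matrix.cons_val_zero,
      Matrix.cons_val_one, Matrix.cons_val_fin_one, Fin.zero_eta, Fin.mk_one, hH, hlam] <;> ring

lemma Vmat5_sub_Vmat5 {c : ℝ} {ω R H H' : ℝ → ℝ → ℝ} {nu nu' : ℝ → ℝ} {u v : ℝ}
    (hH : H' u v = -H u v) (hnu : nu' v = -nu v) :
    Vmat5 c ω R H nu u v - Vmat5 c ω R H' nu' u v
      = !![0, c * nu v * Real.exp (ω u v / 2); 0, 0] := by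
  ext i j
  fin_cases i <;> fin_cases j <;>
    simp only [Vmat5, Matrix.sub_apply, Matrix.of_apply, Matrix.cons_val', Matrix.cons_val_zero,
      Matrix.cons_val_one, Matrix.cons_val_fin_one, Fin.zero_eta, Fin.mk_one, hH, hnu] <;> ring

lemma form2_frame (a b : ℝ) :
    form2 1 1 = -1 ∧ form2 !![0, 0; a, 0] !![0, 0; a, 0] = 0 ∧
      form2 !![0, b; 0, 0] !![0, b; 0, 0] = 0 ∧ 2 * form2 !![0, 0; a, 0] !![0, b; 0, 0] = a * b ∧
      form2 (-kmat) (-kmat) = 1 ∧ form2 (-kmat) 1 = 0 ∧ form2 (-kmat) !![0, 0; a, 0] = 0 ∧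
      form2 (-kmat) !![0, b; 0, 0] = 0 := by
  simp only [form2, kmat, Matrix.trace_fin_two, Matrix.mul_apply, Fin.sum_univ_two]
  norm_num
  ring

lemma mul_exp_half_mul_mul_exp_half {c x y w : ℝ} (hc : c * c = 1) :
    c * x * Real.exp (w / 2) * (c * y * Real.exp (w / 2)) = x * y * Real.exp w := by
  rw [← add_halves w, Real.exp_add, add_halves]
  linear_combination x * y * Real.exp (w / 2) ^ 2 * hc

theorem statement5_general
    (c : ℝ) (hc : c = -1 ∨ c = 1)
    (I J : Set ℝ)
    (hIopen : IsOpen I)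
    (hJopen : IsOpen J)
    (f g : ℝ → ℝ)
    (τ : ℝ)
    (HT : ℝ → ℝ → ℝ → ℝ)
    (hHT : ∀ t u v, HT t u v = (t * f u + t⁻¹ * g v) / (1 - c * f u * g v))
    (lam : ℝ → ℝ → ℝ)
    (hlam : ∀ t u, lam t u = t * (1 - c * (f u) ^ 2) / (t ^ 2 - c * (f u) ^ 2))
    (nu : ℝ → ℝ → ℝ)
    (hnu : ∀ t v, nu t v = t * (1 - c * (g v) ^ 2) / (t ^ 2 - c * (g v) ^ 2))
    (ω Q R : ℝ → ℝ → ℝ)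
    (Ψp Ψm : ℝ → ℝ → Matrix (Fin 2) (Fin 2) ℝ)
    (hΨpsmooth : ∀ i j, ContDiffOn ℝ (⊤ : ℕ∞) (fun p : ℝ × ℝ => Ψp p.1 p.2 i j) (I ×ˢ J))
    (hΨmsmooth : ∀ i j, ContDiffOn ℝ (⊤ : ℕ∞) (fun p : ℝ × ℝ => Ψm p.1 p.2 i j) (I ×ˢ J))
    (hΨpdet : ∀ u ∈ I, ∀ v ∈ J, (Ψp u v).det = 1)
    (hΨmdet : ∀ u ∈ I, ∀ v ∈ J, (Ψm u v).det = 1)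
    (hLaxUp : ∀ u ∈ I, ∀ v ∈ J,
      mderiv (fun x => Ψp x v) u = Ψp u v * Umat5 c ω Q (HT τ) (lam τ) u v)
    (hLaxVp : ∀ u ∈ I, ∀ v ∈ J,
      mderiv (fun y => Ψp u y) v = Ψp u v * Vmat5 c ω R (HT τ) (nu τ) u v)
    (hLaxUm : ∀ u ∈ I, ∀ v ∈ J,
      mderiv (fun x => Ψm x v) u = Ψm u v * Umat5 c ω Q (HT (-τ)) (lam (-τ)) u v)
    (hLaxVm : ∀ u ∈ I, ∀ v ∈ J,
      mderiv (fun y => Ψm u y) v = Ψm u v * Vmat5 c ω R (HT (-τ)) (nu (-τ)) u v)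
    (F N : ℝ → ℝ → Matrix (Fin 2) (Fin 2) ℝ)
    (hF : ∀ u v, F u v = Ψp u v * (Ψm u v)⁻¹)
    (hN : ∀ u v, N u v = -(Ψp u v * kmat * (Ψm u v)⁻¹)) :
    ∀ u ∈ I, ∀ v ∈ J,
      form2 (F u v) (F u v) = -1 ∧
      form2 (mderiv (fun x => F x v) u) (mderiv (fun x => F x v) u) = 0 ∧
      form2 (mderiv (fun y => F u y) v) (mderiv (fun y => F u y) v) = 0 ∧
      2 * form2 (mderiv (fun x => F x v) u) (mderiv (fun y => F u y) v)
        = τ ^ 2 * (1 - c * (f u) ^ 2) * (1 - c * (g v) ^ 2) * Real.exp (ω u v) /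
            ((τ ^ 2 - c * (f u) ^ 2) * (τ ^ 2 - c * (g v) ^ 2)) ∧
      form2 (N u v) (N u v) = 1 ∧
      form2 (N u v) (F u v) = 0 ∧
      form2 (N u v) (mderiv (fun x => F x v) u) = 0 ∧
      form2 (N u v) (mderiv (fun y => F u y) v) = 0 := by
  intro u hu v hv
  have hdiff : ∀ {Ψ : ℝ → ℝ → Matrix (Fin 2) (Fin 2) ℝ},
      (∀ i j, ContDiffOn ℝ (⊤ : ℕ∞) (fun p : ℝ × ℝ => Ψ p.1 p.2 i j) (I ×ˢ J)) →
        ∀ i j, DifferentiableAt ℝ (fun p : ℝ × ℝ => Ψ p.1 p.2 i j) (u, v) := fun h i j =>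
    ((h i j).contDiffAt ((hIopen.prod hJopen).mem_nhds ⟨hu, hv⟩)).differentiableAt (by simp)
  have hHT_neg : HT (-τ) u v = -HT τ u v := by rw [hHT, hHT, inv_neg]; ring
  have hFu : mderiv (fun x => F x v) u
      = Ψp u v * !![0, 0; c * lam τ u * Real.exp (ω u v / 2), 0] * (Ψm u v)⁻¹ := by
    simp only [hF]
    rw [mderiv_mul_inv_of_lax (fun i j => (hdiff hΨpsmooth i j).comp_prodMk_left)
      (fun i j => (hdiff hΨmsmooth i j).comp_prodMk_left)
      (eventually_of_mem (hIopen.mem_nhds hu) fun x hx => hΨmdet x hx v hv)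
      (hLaxUp u hu v hv) (hLaxUm u hu v hv) (trace_Umat5 ..),
      Umat5_sub_Umat5 hHT_neg (by rw [hlam, hlam]; ring)]
  have hFv : mderiv (fun y => F u y) v
      = Ψp u v * !![0, c * nu τ v * Real.exp (ω u v / 2); 0, 0] * (Ψm u v)⁻¹ := by
    simp only [hF]
    rw [mderiv_mul_inv_of_lax (fun i j => (hdiff hΨpsmooth i j).comp_prodMk_right)
      (fun i j => (hdiff hΨmsmooth i j).comp_prodMk_right)
      (eventually_of_mem (hJopen.mem_nhds hv) fun y hy => hΨmdet u hu y hy)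
      (hLaxVp u hu v hv) (hLaxVm u hu v hv) (trace_Vmat5 ..),
      Vmat5_sub_Vmat5 hHT_neg (by rw [hnu, hnu]; ring)]
  have hF1 : F u v = Ψp u v * 1 * (Ψm u v)⁻¹ := by rw [hF, Matrix.mul_one]
  have hNk : N u v = Ψp u v * (-kmat) * (Ψm u v)⁻¹ := by rw [hN]; noncomm_ring
  rw [hFu, hFv, hF1, hNk]
  simp only [form2_mul_mul_inv (hΨpdet u hu v hv) (hΨmdet u hu v hv)]
  obtain ⟨hFF, hFuFu, hFvFv, hFuFv, hNN, hNF, hNFu, hNFv⟩ := form2_frame (c * lam τ u * Real.exp (ω u v / 2))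
    (c * nu τ v * Real.exp (ω u v / 2))
  refine ⟨hFF, hFuFu, hFvFv, hFuFv.trans ?_, hNN, hNF, hNFu, hNFv⟩
  rw [mul_exp_half_mul_mul_exp_half (by rcases hc with rfl | rfl <;> norm_num), hlam, hnu,
    div_mul_div_comm]
  ring

/-- Theorem 6.9: Lax representation with two independent variable spectral
parameters and the immersion formula `F^{(−1)}[τ]` in anti de Sitter space `H³₁`:
`F = Ψ⁺(Ψ⁻)⁻¹` takes values in `H³₁ = {⟨X,X⟩ = −1}`, is conformal with
`2⟨F_u,F_v⟩ = τ²(1−cf²)(1−cg²)e^ω/((τ²−cf²)(τ²−cg²))`, and `N = −Ψ⁺k′(Ψ⁻)⁻¹` is a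
unit normal. -/
theorem statement5
    (c : ℝ) (hc : c = -1 ∨ c = 1)
    (I J : Set ℝ)
    (hIopen : IsOpen I) (hIint : I.OrdConnected)
    (hJopen : IsOpen J) (hJint : J.OrdConnected)
    (f g : ℝ → ℝ)
    (hf : ContDiffOn ℝ (⊤ : ℕ∞) f I) (hg : ContDiffOn ℝ (⊤ : ℕ∞) g J)
    (hfg : ∀ u ∈ I, ∀ v ∈ J, 1 - c * f u * g v ≠ 0)
    (τ : ℝ) (hτ : τ ≠ 0)
    (hτf : ∀ u ∈ I, τ ^ 2 - c * (f u) ^ 2 ≠ 0)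
    (hτg : ∀ v ∈ J, τ ^ 2 - c * (g v) ^ 2 ≠ 0)
    (HT : ℝ → ℝ → ℝ → ℝ)
    (hHT : ∀ t u v, HT t u v = (t * f u + t⁻¹ * g v) / (1 - c * f u * g v))
    (lam : ℝ → ℝ → ℝ)
    (hlam : ∀ t u, lam t u = t * (1 - c * (f u) ^ 2) / (t ^ 2 - c * (f u) ^ 2))
    (nu : ℝ → ℝ → ℝ)
    (hnu : ∀ t v, nu t v = t * (1 - c * (g v) ^ 2) / (t ^ 2 - c * (g v) ^ 2))
    (ω Q R : ℝ → ℝ → ℝ)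
    (hω : Smooth2 ω (I ×ˢ J)) (hQ : Smooth2 Q (I ×ˢ J)) (hR : Smooth2 R (I ×ˢ J))
    (Ψp Ψm : ℝ → ℝ → Matrix (Fin 2) (Fin 2) ℝ)
    (hΨpsmooth : ∀ i j, ContDiffOn ℝ (⊤ : ℕ∞) (fun p : ℝ × ℝ => Ψp p.1 p.2 i j) (I ×ˢ J))
    (hΨmsmooth : ∀ i j, ContDiffOn ℝ (⊤ : ℕ∞) (fun p : ℝ × ℝ => Ψm p.1 p.2 i j) (I ×ˢ J))
    (hΨpdet : ∀ u ∈ I, ∀ v ∈ J, (Ψp u v).det = 1)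
    (hΨmdet : ∀ u ∈ I, ∀ v ∈ J, (Ψm u v).det = 1)
    (hLaxUp : ∀ u ∈ I, ∀ v ∈ J,
      mderiv (fun x => Ψp x v) u = Ψp u v * Umat5 c ω Q (HT τ) (lam τ) u v)
    (hLaxVp : ∀ u ∈ I, ∀ v ∈ J,
      mderiv (fun y => Ψp u y) v = Ψp u v * Vmat5 c ω R (HT τ) (nu τ) u v)
    (hLaxUm : ∀ u ∈ I, ∀ v ∈ J,
      mderiv (fun x => Ψm x v) u = Ψm u v * Umat5 c ω Q (HT (-τ)) (lam (-τ)) u v)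
    (hLaxVm : ∀ u ∈ I, ∀ v ∈ J,
      mderiv (fun y => Ψm u y) v = Ψm u v * Vmat5 c ω R (HT (-τ)) (nu (-τ)) u v)
    (F N : ℝ → ℝ → Matrix (Fin 2) (Fin 2) ℝ)
    (hF : ∀ u v, F u v = Ψp u v * (Ψm u v)⁻¹)
    (hN : ∀ u v, N u v = -(Ψp u v * kmat * (Ψm u v)⁻¹)) :
    ∀ u ∈ I, ∀ v ∈ J,
      form2 (F u v) (F u v) = -1 ∧
      form2 (mderiv (fun x => F x v) u) (mderiv (fun x => F x v) u) = 0 ∧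
      form2 (mderiv (fun y => F u y) v) (mderiv (fun y => F u y) v) = 0 ∧
      2 * form2 (mderiv (fun x => F x v) u) (mderiv (fun y => F u y) v)
        = τ ^ 2 * (1 - c * (f u) ^ 2) * (1 - c * (g v) ^ 2) * Real.exp (ω u v) /
            ((τ ^ 2 - c * (f u) ^ 2) * (τ ^ 2 - c * (g v) ^ 2)) ∧
      form2 (N u v) (N u v) = 1 ∧
      form2 (N u v) (F u v) = 0 ∧
      form2 (N u v) (mderiv (fun x => F x v) u) = 0 ∧
      form2 (N u v) (mderiv (fun y => F u y) v) = 0 :=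
  statement5_general c hc I J hIopen hJopen f g τ HT hHT lam hlam nu hnu ω Q R Ψp Ψm hΨpsmooth
    hΨmsmooth hΨpdet hΨmdet hLaxUp hLaxVp hLaxUm hLaxVm F N hF hN
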